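/- In the coevolutionary action–opinion coordination game with parameters γ_i > 0, β_i > 0, λ_i > 0 for every player, both consensus states are Nash equilibria: at the profile where every player has (x_j, y_j) = (+1, +1), and likewise at the profile where every player has (x_j, y_j) = (−1, −1), no player i can increase their payoff by unilaterally deviating to any pair (x, y) ∈ {−1,+1} × [−1,1]. -/
import Mathlib


open Finset

/-- Payoff of player `i` in the coevolutionary action–opinion coordination game for
choosing the pair `(a,b) ∈ {-1,+1} × [-1,1]` against the actions `x` and opinions
`y` of the others. -/
noncomputable def coevCoordPayoff (n : ℕ) (A W : Fin n → Fin n → ℝ)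
    (γ β lam : ℝ) (i : Fin n) (x y : Fin n → ℝ) (a b : ℝ) : ℝ :=
  γ / 4 * ∑ j, A i j * ((1 - x j) * (1 - a) + (1 + x j) * (1 + a))
    - β / 2 * ∑ j, W i j * (b - y j) ^ 2
    - lam / 2 * (a - b) ^ 2

/-- In the coevolutionary action–opinion coordination game with
parameters `γ_i, β_i, λ_i > 0`, both consensus states are Nash equilibria: at the
profile where everyone holds `(x_j, y_j) = (+1, +1)`, and at the profile where
everyone holds `(x_j, y_j) = (-1, -1)`, no player `i` can increase their payoff by
unilaterally deviating to any `(a,b) ∈ {-1,+1} × [-1,1]`. -/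
theorem coev_coordination_consensus_nash
    (n : ℕ) (A W : Fin n → Fin n → ℝ)
    (hA : ∀ i j, 0 ≤ A i j) (hAdiag : ∀ i, A i i = 0) (hArow : ∀ i, ∑ j, A i j = 1)
    (hW : ∀ i j, 0 ≤ W i j) (hWdiag : ∀ i, W i i = 0) (hWrow : ∀ i, ∑ j, W i j = 1)
    (γ β lam : Fin n → ℝ)
    (hγ : ∀ i, 0 < γ i) (hβ : ∀ i, 0 < β i) (hlam : ∀ i, 0 < lam i) :
    (∀ i : Fin n, ∀ a b : ℝ, (a = -1 ∨ a = 1) → b ∈ Set.Icc (-1 : ℝ) 1 →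
      coevCoordPayoff n A W (γ i) (β i) (lam i) i (fun _ => 1) (fun _ => 1) a b ≤
        coevCoordPayoff n A W (γ i) (β i) (lam i) i (fun _ => 1) (fun _ => 1) 1 1) ∧
    (∀ i : Fin n, ∀ a b : ℝ, (a = -1 ∨ a = 1) → b ∈ Set.Icc (-1 : ℝ) 1 →
      coevCoordPayoff n A W (γ i) (β i) (lam i) i (fun _ => -1) (fun _ => -1) a b ≤
        coevCoordPayoff n A W (γ i) (β i) (lam i) i (fun _ => -1) (fun _ => -1)
          (-1) (-1)) := by
  constructor
  · intro i a b ha hb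
    obtain ⟨hb1, hb2⟩ := hb
    simp only [coevCoordPayoff, ← Finset.sum_mul]
    rw [hArow, hWrow]
    have hγi := hγ i; have hβi := hβ i; have hli := hlam i
    rcases ha with rfl | rfl <;> nlinarith [mul_nonneg hβi.le (sq_nonneg (b - 1)),
      mul_nonneg hli.le (sq_nonneg (b - 1)), mul_nonneg hli.le (sq_nonneg (b + 1))]
  · intro i a b ha hb
    obtain ⟨hb1, hb2⟩ := hb
    simp only [coevCoordPayoff, ← Finset.sum_mul]
    rw [hArow, hWrow]
    have hγi := hγ i; have hβi := hβ i; have hli := hlam i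
    rcases ha with rfl | rfl <;> nlinarith [mul_nonneg hβi.le (sq_nonneg (b + 1)),
      mul_nonneg hli.le (sq_nonneg (b - 1)), mul_nonneg hli.le (sq_nonneg (b + 1))]
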